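/- arXiv:1706.02016 — 3 statements merged into one kernel-verified Lean document; each statement's English description precedes it below -/
import Mathlib

section
/- Let H_1, ..., H_n be subnormal subgroups of a finite group G. Then the subgroup K generated by H_1, ..., H_n is subnormal in G. -/
/-- `H` is subnormal in `G`: there is a chain `H = f 0 ⊴ f 1 ⊴ ... ⊴ f n = ⊤`. -/
def IsSubnormal {G : Type*} [Group G] (H : Subgroup G) : Prop :=
  ∃ (n : ℕ) (f : Fin (n + 1) → Subgroup G),
    f 0 = H ∧ f (Fin.last n) = ⊤ ∧
    ∀ i : Fin n, f i.castSucc ≤ f i.succ ∧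
      ((f i.castSucc).subgroupOf (f i.succ)).Normal

/-!
Induction on `|G|`. The key fact (Wielandt) is that a minimal normal subgroup `V` of a finite
group normalizes every subnormal subgroup `H`. If `H ≠ G`, its normal closure `M` is proper. If
`V ∩ M = 1`, then `V` centralizes `M ⊇ H`. Otherwise `V ≤ M`, and `V` is the normal closure of a
minimal normal subgroup `W` of `M` inside `V`; every `G`-conjugate of `W` is again minimal normal
in `M`, hence normalizes `H` by induction.

For the join `J` of subnormal subgroups, pick a minimal normal `V`. If `JV = G`, then `V`
normalizes each `Hᵢ`, hence `J`, so `J` is normal. Otherwise `J` is subnormal in the smaller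
group `JV` by induction, and `JV`, the preimage of the join of the images of the `Hᵢ` in `G/V`,
is subnormal by induction applied to `G/V`.
-/

theorem isSubnormal_iff_subgroup_isSubnormal {G : Type*} [Group G] {H : Subgroup G} :
    IsSubnormal H ↔ H.IsSubnormal := by
  constructor
  · rintro ⟨n, f, rfl, hlast, hstep⟩
    suffices ∀ j, (f j).IsSubnormal from this 0
    intro j
    induction j using Fin.reverseInduction with
    | last => rw [hlast]; exact .top
    | cast i ih => exact .step _ _ (hstep i).1 ih (hstep i).2
  · intro h
    induction h with
    | top => exact ⟨0, fun _ => ⊤, rfl, rfl, Fin.elim0⟩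
    | step H K hle _ hN ih =>
      obtain ⟨n, f, rfl, hlast, hstep⟩ := ih
      refine ⟨n + 1, Fin.cons H f, rfl, hlast, fun i => ?_⟩
      induction i using Fin.cases with
      | zero => exact ⟨hle, hN⟩
      | succ i => exact hstep i

namespace Subgroup

variable {G : Type*} [Group G]

theorem card_lt_of_ne_top [Finite G] {K : Subgroup G} (hK : K ≠ ⊤) : Nat.card K < Nat.card G :=
  (card_le_card_group K).lt_of_ne (mt (card_eq_iff_eq_top K).mp hK)

theorem card_quotient_lt_of_ne_bot [Finite G] {K : Subgroup G} (hK : K ≠ ⊥) :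
    Nat.card (G ⧸ K) < Nat.card G := by
  rw [card_eq_card_quotient_mul_card_subgroup K]
  exact lt_mul_of_one_lt_right Nat.card_pos ((one_lt_card_iff_ne_bot K).mpr hK)

theorem iSup_subgroupOf {ι : Sort*} {H : ι → Subgroup G} {K : Subgroup G} (h : ∀ i, H i ≤ K) :
    (⨆ i, H i).subgroupOf K = ⨆ i, (H i).subgroupOf K := by
  apply map_injective K.subtype_injective
  rw [map_iSup, map_subgroupOf_eq_of_le (iSup_le h)]
  exact iSup_congr fun i => (map_subgroupOf_eq_of_le (h i)).symm

theorem le_centralizer_of_disjoint_normalClosure {V H : Subgroup G} (hV : V.Normal)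
    (hdisj : Disjoint V (normalClosure (H : Set G))) : V ≤ centralizer H := fun v hv h hh =>
  (commute_of_normal_of_disjoint _ _ hV normalClosure_normal hdisj v h hv
    (le_normalClosure hh)).symm

theorem normalClosure_map_subtype_le_normalizer {M H : Subgroup G} [M.Normal] (hHM : H ≤ M)
    {W : Subgroup M}
    (hW : ∀ g : G, W.map (MulAut.conjNormal g).toMonoidHom ≤ normalizer (H.subgroupOf M : Set M)) :
    normalClosure (W.map M.subtype : Set G) ≤ normalizer (H : Set G) := by
  refine (closure_le _).mpr fun x hx => ?_
  obtain ⟨_, ⟨w, hw, rfl⟩, hconj⟩ := Group.mem_conjugatesOfSet_iff.mp hx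
  obtain ⟨g, rfl⟩ := isConj_iff.mp hconj
  have hmem : g * w * g⁻¹ ∈ (normalizer (H.subgroupOf M : Set M)).map M.subtype :=
    ⟨_, hW g ⟨w, hw, rfl⟩, MulAut.conjNormal_apply g w⟩
  have := le_normalizer_map M.subtype hmem
  rwa [map_subgroupOf_eq_of_le hHM] at this

abbrev IsMinimalNormal (N : Subgroup G) : Prop :=
  Minimal (fun K : Subgroup G => K.Normal ∧ K ≠ ⊥) N

theorem exists_isMinimalNormal_le [Finite G] {N : Subgroup G} (hN : N.Normal) (hbot : N ≠ ⊥) :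
    ∃ M ≤ N, M.IsMinimalNormal :=
  exists_minimal_le_of_wellFoundedLT _ N ⟨hN, hbot⟩

theorem IsMinimalNormal.map_mulEquiv {G' : Type*} [Group G'] {N : Subgroup G}
    (hN : N.IsMinimalNormal) (e : G ≃* G') : (N.map e.toMonoidHom).IsMinimalNormal := by
  refine ⟨⟨hN.1.1.map _ e.surjective, (map_eq_bot_iff_of_injective _ e.injective).not.mpr hN.1.2⟩,
    fun K ⟨hK, hKbot⟩ hKN => map_le_iff_le_comap.mpr (hN.2 ⟨hK.comap _, fun h => hKbot ?_⟩ ?_)⟩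
  · rw [← map_comap_eq_self_of_surjective (f := e.toMonoidHom) e.surjective K, h, map_bot]
  · rw [← comap_map_eq_self_of_injective (f := e.toMonoidHom) e.injective N]
    exact comap_mono hKN

theorem IsMinimalNormal.le_normalizer_of_isSubnormal [Finite G] {V H : Subgroup G}
    (hV : V.IsMinimalNormal) (hH : H.IsSubnormal) : V ≤ normalizer (H : Set G) := by
  induction hcard : Nat.card G using Nat.strong_induction_on generalizing G with
  | _ n ih =>
  obtain rfl | ⟨K, hK, hHK, hKtop⟩ := hH.lt_normal
  · exact le_normalizer_of_normal
  set M := normalClosure (H : Set G)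
  have : V.Normal := hV.1.1
  have : M.Normal := normalClosure_normal
  by_cases hVM : Disjoint V M
  · exact (le_centralizer_of_disjoint_normalClosure hV.1.1 hVM).trans (centralizer_le_normalizer _)
  have hVM : V ≤ M :=
    hV.eq_of_le ⟨normal_inf_normal V M, disjoint_iff.not.mp hVM⟩ inf_le_left ▸ inf_le_right
  obtain ⟨W, hWV, hW⟩ := exists_isMinimalNormal_le (hV.1.1.subgroupOf M)
    (subgroupOf_eq_bot.not.mpr fun h => hV.1.2 (disjoint_self.mp (h.mono_right hVM)))
  have hMtop : M ≠ ⊤ := ((normalClosure_le_normal (N := K) hHK).trans_lt hKtop).ne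
  have hWH : normalClosure (W.map M.subtype : Set G) ≤ normalizer (H : Set G) :=
    normalClosure_map_subtype_le_normalizer le_normalClosure fun g =>
      ih _ (hcard ▸ card_lt_of_ne_top hMtop) (hW.map_mulEquiv _) hH.subgroupOf rfl
  have hWmap_le : W.map M.subtype ≤ V := by
    simpa only [map_subgroupOf_eq_of_le hVM] using map_mono (f := M.subtype) hWV
  have hWbot : W.map M.subtype ≠ ⊥ :=
    (map_eq_bot_iff_of_injective _ M.subtype_injective).not.mpr hW.1.2
  have hWclosure : normalClosure (W.map M.subtype : Set G) = V :=
    hV.eq_of_le ⟨normalClosure_normal, fun h => hWbot (le_bot_iff.mp (h ▸ le_normalClosure))⟩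
      (normalClosure_le_normal hWmap_le)
  exact hWclosure ▸ hWH

theorem IsSubnormal.iSup [Finite G] {ι : Sort*} {H : ι → Subgroup G}
    (hH : ∀ i, (H i).IsSubnormal) : (⨆ i, H i).IsSubnormal := by
  induction hcard : Nat.card G using Nat.strong_induction_on generalizing G with
  | _ n ih =>
  set J := ⨆ i, H i
  obtain hJ | hJ := eq_or_ne J ⊤
  · exact hJ ▸ .top
  obtain ⟨V, -, hV⟩ := exists_isMinimalNormal_le normal_top (bot_le.trans_lt hJ.lt_top).ne'
  have : V.Normal := hV.1.1
  by_cases hJV : J ⊔ V = ⊤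
  · refine (normalizer_eq_top_iff.mp (top_le_iff.mp ?_)).isSubnormal
    rw [← hJV]
    exact sup_le le_normalizer ((le_iInf fun i => hV.le_normalizer_of_isSubnormal (hH i)).trans
      (iInf_normalizer_le_normalizer_iSup H))
  have hJsn : (J.subgroupOf (J ⊔ V)).IsSubnormal := by
    rw [iSup_subgroupOf fun i => (le_iSup H i).trans le_sup_left]
    exact ih _ (hcard ▸ card_lt_of_ne_top hJV) (fun i => (hH i).subgroupOf) rfl
  have hJVsn : (J ⊔ V).IsSubnormal := by
    have := (ih _ (hcard ▸ card_quotient_lt_of_ne_bot hV.1.2)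
      (H := fun i => (H i).map (QuotientGroup.mk' V)) (fun i => (hH i).quotient) rfl).comap
      (QuotientGroup.mk' V)
    rwa [← map_iSup, QuotientGroup.comap_map_mk', sup_comm] at this
  exact IsSubnormal.trans le_sup_left hJsn hJVsn

end Subgroup

/-- The join of finitely many subnormal subgroups is subnormal. -/
theorem stmt2 {G : Type*} [Group G] [Finite G] (n : ℕ) (H : Fin n → Subgroup G)
    (h : ∀ i, IsSubnormal (H i)) : IsSubnormal (⨆ i, H i) :=
  isSubnormal_iff_subgroup_isSubnormal.mpr
    (Subgroup.IsSubnormal.iSup fun i => isSubnormal_iff_subgroup_isSubnormal.mp (h i))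
end

section
/- Let G be a finite group, π a set of primes, and N the Fitting subgroup of G. Then the set of π-maximal subgroups of G/N equals { KN/N : K a π-maximal subgroup of G }; that is, for every π-maximal subgroup K of G, the image KN/N is π-maximal in G/N, and every π-maximal subgroup of G/N arises this way. -/
open Subgroup
open scoped Pointwise
open scoped commutatorElement

/-- `H` is a `π`-subgroup: every prime dividing `|H|` lies in `π`. -/
def IsPiSubgroup (π : Set ℕ) {G : Type*} [Group G] (H : Subgroup G) : Prop :=
  ∀ p : ℕ, p.Prime → p ∣ Nat.card H → p ∈ π

/-- `H` is `π`-maximal: maximal under inclusion among `π`-subgroups. -/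
def IsPiMaximal (π : Set ℕ) {G : Type*} [Group G] (H : Subgroup G) : Prop :=
  IsPiSubgroup π H ∧ ∀ K : Subgroup G, IsPiSubgroup π K → H ≤ K → H = K

section Aux

private lemma piCoprime {π : Set ℕ} {a b : ℕ} (ha : ∀ p : ℕ, p.Prime → p ∣ a → p ∈ π)
    (hb : ∀ p : ℕ, p.Prime → p ∣ b → p ∉ π) : Nat.Coprime a b := by
  by_contra h
  have h1 : (Nat.gcd a b).minFac.Prime := Nat.minFac_prime h
  have h2 : (Nat.gcd a b).minFac ∣ a := (Nat.minFac_dvd _).trans (Nat.gcd_dvd_left a b)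
  have h3 : (Nat.gcd a b).minFac ∣ b := (Nat.minFac_dvd _).trans (Nat.gcd_dvd_right a b)
  exact hb _ h1 h3 (ha _ h1 h2)

variable {G : Type*} [Group G]

private lemma solvable_of_mulEquiv {G₁ G₂ : Type*} [Group G₁] [Group G₂] [Group.IsSolvable G₁]
    (e : G₁ ≃* G₂) : Group.IsSolvable G₂ :=
  solvable_of_surjective (f := e.toMonoidHom) e.surjective

private lemma map_conj_self (A : Subgroup G) [hN : A.Normal] (g : G) :
    A.map (MulAut.conj g).toMonoidHom = A := by
  ext x
  constructor
  · rintro ⟨a, ha, rfl⟩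
    simpa using hN.conj_mem a ha g
  · intro hx
    refine ⟨g⁻¹ * x * g, by simpa using hN.conj_mem x hx g⁻¹, by simp [mul_assoc]⟩

private lemma conj_comp (g h : G) :
    (MulAut.conj g).toMonoidHom.comp (MulAut.conj h).toMonoidHom
      = (MulAut.conj (g * h)).toMonoidHom := by
  ext x
  simp [mul_assoc]

private lemma map_conj_map_conj (H : Subgroup G) (g h : G) :
    (H.map (MulAut.conj h).toMonoidHom).map (MulAut.conj g).toMonoidHom
      = H.map (MulAut.conj (g * h)).toMonoidHom := by
  rw [Subgroup.map_map, conj_comp]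

private lemma card_map_equiv {G' : Type*} [Group G'] (H : Subgroup G) (f : G →* G')
    (hf : Function.Injective f) : Nat.card (H.map f) = Nat.card H :=
  (Nat.card_congr (H.equivMapOfInjective f hf).toEquiv).symm

private lemma card_subgroupOf {A L : Subgroup G} (h : A ≤ L) :
    Nat.card (A.subgroupOf L) = Nat.card A :=
  Nat.card_congr (subgroupOfEquivOfLe h).toEquiv

private lemma isComplement'_conj [Finite G] {A H : Subgroup G} [A.Normal]
    (hc : IsComplement' A H) (g : G) :
    IsComplement' A (H.map (MulAut.conj g).toMonoidHom) := by
  apply isComplement'_of_card_mul_and_disjoint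
  · rw [card_map_equiv H _ (MulAut.conj g).injective]
    exact hc.card_mul
  · rw [disjoint_iff, eq_bot_iff]
    rintro x ⟨hxA, a, ha, rfl⟩
    have hmem : a ∈ A ⊓ H := by
      refine ⟨?_, ha⟩
      have := ‹A.Normal›.conj_mem _ hxA g⁻¹
      simpa [mul_assoc] using this
    rw [hc.disjoint.eq_bot] at hmem
    simp only [Subgroup.mem_bot] at hmem
    subst hmem
    simp

/-- Conjugacy of complements to an abelian normal subgroup of coprime order. -/
private theorem conj_of_isComplement'_abelian [Finite G]
    {A H K : Subgroup G} [A.Normal] [IsMulCommutative A]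
    (hco : Nat.Coprime (Nat.card A) A.index)
    (hH : IsComplement' A H) (hK : IsComplement' A K) :
    ∃ g : G, H.map (MulAut.conj g).toMonoidHom = K := by
  classical
  let T : ∀ (J : Subgroup G), IsComplement' A J → A.LeftTransversal :=
    fun J hJ => ⟨(J : Set G), isComplement'_def.mp hJ.symm⟩
  let qd : A.LeftTransversal → A.QuotientDiff := Quotient.mk''
  have stab_eq : ∀ (J : Subgroup G) (hJ : IsComplement' A J),
      MulAction.stabilizer G (qd (T J hJ)) = J := by
    intro J hJ
    have hfix : J ≤ MulAction.stabilizer G (qd (T J hJ)) := by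
      intro k hk
      have h2 : (MulOpposite.op k⁻¹ • (T J hJ)) = T J hJ := by
        apply Subtype.ext
        show MulOpposite.op k⁻¹ • (J : Set G) = (J : Set G)
        ext x
        rw [Set.mem_smul_set_iff_inv_smul_mem]
        have hx : (MulOpposite.op k⁻¹)⁻¹ • x = x * k := by
          simp [MulOpposite.smul_eq_mul_unop]
        rw [hx]
        exact ⟨fun hxk => by simpa using mul_mem hxk (inv_mem hk),
          fun hx' => mul_mem hx' hk⟩
      have h1 : k • (qd (T J hJ)) = qd (MulOpposite.op k⁻¹ • (T J hJ)) := rfl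
      show _ ∈ MulAction.stabilizer G _
      rw [MulAction.mem_stabilizer_iff, h1, h2]
    have hstab := isComplement'_stabilizer_of_coprime (α := qd (T J hJ)) hco
    have hcard : Nat.card (MulAction.stabilizer G (qd (T J hJ))) ≤ Nat.card J := by
      have e1 := hstab.card_mul
      have e2 := hJ.card_mul
      have hpos : 0 < Nat.card A := Nat.card_pos
      exact le_of_eq (Nat.eq_of_mul_eq_mul_left hpos (e1.trans e2.symm))
    exact (Subgroup.eq_of_le_of_card_ge hfix hcard).symm
  obtain ⟨h, hh⟩ := Subgroup.exists_smul_eq hco (qd (T H hH)) (qd (T K hK))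
  refine ⟨(h : G), ?_⟩
  have hh' : ((h : G)) • (qd (T H hH)) = qd (T K hK) := hh
  calc H.map (MulAut.conj (h : G)).toMonoidHom
      = (MulAction.stabilizer G (qd (T H hH))).map
          (MulAut.conj (h : G)).toMonoidHom := by rw [stab_eq H hH]
    _ = MulAction.stabilizer G ((h : G) • (qd (T H hH))) :=
        (MulAction.stabilizer_smul_eq_stabilizer_map_conj _ _).symm
    _ = K := by rw [hh', stab_eq K hK]

private lemma isComplement'_map_quotient {A H D : Subgroup G} [D.Normal]
    (hc : IsComplement' A H) (hDA : D ≤ A) :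
    IsComplement' (A.map (QuotientGroup.mk' D)) (H.map (QuotientGroup.mk' D)) := by
  apply isComplement'_of_disjoint_and_mul_eq_univ
  · rw [disjoint_iff, eq_bot_iff]
    rintro x ⟨hxA, hxH⟩
    obtain ⟨a, ha, rfl⟩ := hxA
    obtain ⟨h, hh, hba⟩ := hxH
    have heq : (h : G ⧸ D) = (a : G ⧸ D) := by
      simpa [QuotientGroup.mk'_apply] using hba
    have hd : h⁻¹ * a ∈ D := QuotientGroup.eq.mp heq
    have hhA : h ∈ A := by
      have hrw : h = a * (h⁻¹ * a)⁻¹ := by group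
      rw [hrw]; exact mul_mem ha (inv_mem (hDA hd))
    have hbot : h ∈ A ⊓ H := ⟨hhA, hh⟩
    rw [hc.disjoint.eq_bot, Subgroup.mem_bot] at hbot
    subst hbot
    rw [Subgroup.mem_bot, ← hba, map_one]
  · rw [Set.eq_univ_iff_forall]
    intro x
    obtain ⟨g, rfl⟩ := QuotientGroup.mk'_surjective D x
    have : g ∈ (A : Set G) * (H : Set G) := by rw [hc.mul_eq]; trivial
    obtain ⟨a, ha, h, hh, rfl⟩ := this
    exact ⟨QuotientGroup.mk' D a, ⟨a, ha, rfl⟩, QuotientGroup.mk' D h, ⟨h, hh, rfl⟩,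
      (map_mul _ _ _).symm⟩

private lemma isComplement'_subgroupOf {D J S : Subgroup G} [D.Normal]
    (hdisj : D ⊓ J = ⊥) (hsup : J ⊔ D = S) (hDS : D ≤ S) (hJS : J ≤ S) :
    IsComplement' (D.subgroupOf S) (J.subgroupOf S) := by
  apply isComplement'_of_disjoint_and_mul_eq_univ
  · rw [disjoint_iff, eq_bot_iff]
    rintro ⟨x, hxS⟩ ⟨hxD, hxJ⟩
    have : x ∈ D ⊓ J := ⟨hxD, hxJ⟩
    rw [hdisj] at this
    simp only [Subgroup.mem_bot] at this
    subst this
    simp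
  · rw [Set.eq_univ_iff_forall]
    rintro ⟨s, hs⟩
    have hs' : s ∈ D ⊔ J := by
      rw [sup_comm, hsup]; exact hs
    have : s ∈ (D : Set G) * (J : Set G) := by
      rw [← Subgroup.normal_mul]; exact_mod_cast hs'
    obtain ⟨d, hd, j, hj, rfl⟩ := this
    refine ⟨⟨d, hDS hd⟩, ?_, ⟨j, hJS hj⟩, ?_, rfl⟩
    · show (⟨d, hDS hd⟩ : S) ∈ D.subgroupOf S
      exact hd
    · show (⟨j, hJS hj⟩ : S) ∈ J.subgroupOf S
      exact hj

/-- Conjugacy of complements to a solvable normal subgroup of coprime order. -/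
private theorem conj_of_isComplement'_solvable :
    ∀ (n : ℕ) {G : Type*} [Group G] [Finite G] (A : Subgroup G), Nat.card A ≤ n →
    ∀ [A.Normal] [Group.IsSolvable A], Nat.Coprime (Nat.card A) A.index →
    ∀ {H K : Subgroup G}, IsComplement' A H → IsComplement' A K →
    ∃ g : G, H.map (MulAut.conj g).toMonoidHom = K := by
  intro n
  induction n with
  | zero =>
    intro G _ _ A hA
    exact absurd (Nat.card_pos.trans_le hA) (lt_irrefl 0)
  | succ n ih =>
    intro G _ _ A hcard _ _ hco H K hH hK
    by_cases hab : ⁅A, A⁆ = ⊥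
    · haveI : IsMulCommutative A := by
        constructor
        constructor
        rintro ⟨a, ha⟩ ⟨b, hb⟩
        have : ⁅a, b⁆ ∈ ⁅A, A⁆ := commutator_mem_commutator ha hb
        rw [hab, Subgroup.mem_bot, commutatorElement_eq_one_iff_mul_comm] at this
        exact Subtype.ext this
      exact conj_of_isComplement'_abelian hco hH hK
    · have hDA : ⁅A, A⁆ ≤ A := by
        rw [Subgroup.commutator_le]
        intro g hg h hh
        exact mul_mem (mul_mem (mul_mem hg hh) (inv_mem hg)) (inv_mem hh)
      set D := ⁅A, A⁆ with hD
      have hmapds : ∀ m : ℕ, (derivedSeries A m).map A.subtype = A →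
          (derivedSeries A (m + 1)).map A.subtype = D := by
        intro m hm
        rw [derivedSeries_succ, Subgroup.map_commutator, hm]
      have hDne : D ≠ A := by
        intro hEq
        obtain ⟨m, hm⟩ := Group.IsSolvable.solvable (G := A)
        have hAll : ∀ k : ℕ, (derivedSeries A k).map A.subtype = A := by
          intro k
          induction k with
          | zero =>
            rw [derivedSeries_zero, ← MonoidHom.range_eq_map, Subgroup.range_subtype]
          | succ k ihk => rw [hmapds k ihk, hEq]
        have hbA := hAll m
        rw [hm] at hbA
        simp only [Subgroup.map_bot] at hbA
        exact hab (hEq.trans hbA.symm)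
      haveI : D.Normal := Subgroup.commutator_normal A A
      set f := QuotientGroup.mk' D with hf
      have hfsurj : Function.Surjective f := QuotientGroup.mk'_surjective D
      haveI : (A.map f).Normal := Subgroup.Normal.map ‹A.Normal› f hfsurj
      haveI : IsMulCommutative (A.map f) := by
        constructor
        constructor
        rintro ⟨x, hx⟩ ⟨y, hy⟩
        obtain ⟨a, ha, rfl⟩ := hx
        obtain ⟨b, hb, rfl⟩ := hy
        apply Subtype.ext
        show f a * f b = f b * f a
        rw [← map_mul, ← map_mul]
        rw [hf]
        show QuotientGroup.mk (a * b) = QuotientGroup.mk (b * a)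
        rw [QuotientGroup.eq]
        have : (a * b)⁻¹ * (b * a) = ⁅b⁻¹, a⁻¹⁆ := by
          simp [commutatorElement_def, mul_assoc]
        rw [this]
        exact commutator_mem_commutator (inv_mem hb) (inv_mem ha)
      have hcAH : IsComplement' (A.map f) (H.map f) := isComplement'_map_quotient hH hDA
      have hcAK : IsComplement' (A.map f) (K.map f) := isComplement'_map_quotient hK hDA
      have hcoq : Nat.Coprime (Nat.card (A.map f)) (A.map f).index := by
        have hidx : (A.map f).index = A.index := by
          have := Subgroup.index_comap_of_surjective (A.map f) hfsurj
          rw [Subgroup.comap_map_eq, QuotientGroup.ker_mk', sup_of_le_left hDA] at this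
          exact this.symm
        have hdvd : Nat.card (A.map f) ∣ Nat.card A :=
          Subgroup.card_dvd_of_surjective _ (f.subgroupMap_surjective A)
        rw [hidx]
        exact Nat.Coprime.coprime_dvd_left hdvd hco
      obtain ⟨gq, hgq⟩ := conj_of_isComplement'_abelian hcoq hcAH hcAK
      obtain ⟨g, rfl⟩ := hfsurj gq
      have hcomm : ∀ (X : Subgroup G),
          (X.map (MulAut.conj g).toMonoidHom).map f
            = (X.map f).map (MulAut.conj (f g)).toMonoidHom := by
        intro X
        rw [Subgroup.map_map, Subgroup.map_map]
        have hcc : f.comp (MulAut.conj g).toMonoidHom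
            = ((MulAut.conj (f g)).toMonoidHom).comp f := by
          ext x
          simp
        rw [hcc]
      set H₂ := H.map (MulAut.conj g).toMonoidHom with hH₂def
      have hcH₂ : IsComplement' A H₂ := isComplement'_conj hH g
      have hmapH₂ : H₂.map f = K.map f := by
        rw [hH₂def, hcomm, hgq]
      have hker : f.ker = D := QuotientGroup.ker_mk' D
      have hsupeq : H₂ ⊔ D = K ⊔ D := by
        have h1 := Subgroup.comap_map_eq f H₂
        have h2 := Subgroup.comap_map_eq f K
        rw [hmapH₂] at h1
        rw [hker] at h1 h2
        rw [← h1, h2]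
      set S := K ⊔ D with hS
      have hKS : K ≤ S := le_sup_left
      have hDS : D ≤ S := le_sup_right
      have hH₂S : H₂ ≤ S := le_trans le_sup_left (le_of_eq hsupeq)
      haveI : (D.subgroupOf S).Normal := inferInstance
      haveI : Group.IsSolvable D := solvable_of_mulEquiv (subgroupOfEquivOfLe hDA)
      haveI : Group.IsSolvable (D.subgroupOf S) :=
        solvable_of_mulEquiv (subgroupOfEquivOfLe hDS).symm
      have hDdisjK : D ⊓ K = ⊥ := by
        rw [eq_bot_iff, ← hK.disjoint.eq_bot]
        exact inf_le_inf_right _ hDA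
      have hDdisjH₂ : D ⊓ H₂ = ⊥ := by
        rw [eq_bot_iff, ← hcH₂.disjoint.eq_bot]
        exact inf_le_inf_right _ hDA
      have hc1 : IsComplement' (D.subgroupOf S) (K.subgroupOf S) :=
        isComplement'_subgroupOf hDdisjK hS.symm hDS hKS
      have hc2 : IsComplement' (D.subgroupOf S) (H₂.subgroupOf S) :=
        isComplement'_subgroupOf hDdisjH₂ hsupeq hDS hH₂S
      have hcardD : Nat.card (D.subgroupOf S) = Nat.card D := card_subgroupOf hDS
      have hcardlt : Nat.card D < Nat.card A := by
        have hle : Nat.card D ≤ Nat.card A := Subgroup.card_le_of_le hDA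
        rcases lt_or_eq_of_le hle with h | h
        · exact h
        · exact absurd (Subgroup.eq_of_le_of_card_ge hDA h.ge) hDne
      have hcardK : Nat.card K = A.index := by
        have e1 := hK.card_mul
        have e2 := Subgroup.card_mul_index A
        exact Nat.eq_of_mul_eq_mul_left Nat.card_pos (e1.trans e2.symm)
      have hcoS : Nat.Coprime (Nat.card (D.subgroupOf S)) (D.subgroupOf S).index := by
        have hidx : (D.subgroupOf S).index = Nat.card (K.subgroupOf S) := by
          have e1 := hc1.card_mul
          have e2 := Subgroup.card_mul_index (D.subgroupOf S)
          exact Nat.eq_of_mul_eq_mul_left Nat.card_pos (e2.trans e1.symm)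
        rw [hcardD, hidx, card_subgroupOf hKS, hcardK]
        exact Nat.Coprime.coprime_dvd_left (Subgroup.card_dvd_of_le hDA) hco
      obtain ⟨σ, hσ⟩ := ih (D.subgroupOf S) (by omega : Nat.card (D.subgroupOf S) ≤ n)
        hcoS hc2 hc1
      refine ⟨(σ : G) * g, ?_⟩
      rw [← map_conj_map_conj, ← hH₂def]
      have hback : ∀ (X : Subgroup G) (hXS : X ≤ S),
          (X.subgroupOf S).map ((MulAut.conj σ).toMonoidHom) =
            (X.map (MulAut.conj (σ : G)).toMonoidHom).subgroupOf S →
          X.map (MulAut.conj (σ : G)).toMonoidHom ≤ S →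
          True := fun _ _ _ _ => trivial
      -- transfer hσ from S to G
      have key : (H₂.map (MulAut.conj (σ : G)).toMonoidHom) = K := by
        have h1 : ((H₂.subgroupOf S).map (MulAut.conj σ).toMonoidHom).map S.subtype
            = (K.subgroupOf S).map S.subtype := by rw [hσ]
        rw [Subgroup.subgroupOf_map_subtype, inf_of_le_left hKS] at h1
        rw [Subgroup.map_map] at h1
        have hcomp : S.subtype.comp (MulAut.conj σ).toMonoidHom
            = ((MulAut.conj (σ : G)).toMonoidHom).comp S.subtype := by
          ext x; rfl
        rw [hcomp, ← Subgroup.map_map, Subgroup.subgroupOf_map_subtype,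
          inf_of_le_left hH₂S] at h1
        exact h1
      exact key

/-- Key lemma: if `A` is a solvable normal π'-subgroup with π-index, then any
π-maximal subgroup `M` satisfies `A ⊔ M = ⊤`. -/
private theorem sup_eq_top_of_piMaximal {G : Type*} [Group G] [Finite G] (π : Set ℕ)
    (A : Subgroup G) [A.Normal] [Group.IsSolvable A]
    (hA : ∀ p : ℕ, p.Prime → p ∣ Nat.card A → p ∉ π)
    (hQ : ∀ p : ℕ, p.Prime → p ∣ A.index → p ∈ π)
    {M : Subgroup G} (hM : IsPiSubgroup π M)
    (hmax : ∀ K : Subgroup G, IsPiSubgroup π K → M ≤ K → M = K) :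
    A ⊔ M = ⊤ := by
  have hco : Nat.Coprime (Nat.card A) A.index := (piCoprime hQ hA).symm
  obtain ⟨H, hH⟩ := Subgroup.exists_right_complement'_of_coprime hco
  have hcoAM : Nat.Coprime (Nat.card A) (Nat.card M) := (piCoprime hM hA).symm
  have hdAM : A ⊓ M = ⊥ := by
    apply Subgroup.eq_bot_of_card_eq
    exact Nat.eq_one_of_dvd_coprimes hcoAM
      (Subgroup.card_dvd_of_le inf_le_left) (Subgroup.card_dvd_of_le inf_le_right)
  set S := A ⊔ M with hS
  have hAS : A ≤ S := le_sup_left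
  have hMS : M ≤ S := le_sup_right
  have hc1 : IsComplement' (A.subgroupOf S) (M.subgroupOf S) :=
    isComplement'_subgroupOf hdAM (by rw [sup_comm]) hAS hMS
  have hHS : (H ⊓ S) ⊔ A = S := by
    apply le_antisymm
    · exact sup_le (inf_le_right) hAS
    · intro s hs
      have : s ∈ (A : Set G) * (H : Set G) := by
        rw [hH.mul_eq]; trivial
      obtain ⟨a, ha, h, hh, rfl⟩ := this
      have hhS : h ∈ S := by
        have : a⁻¹ * (a * h) ∈ S := mul_mem (inv_mem (hAS ha)) hs
        simpa using this
      exact mul_mem (Subgroup.mem_sup_right ha) (Subgroup.mem_sup_left ⟨hh, hhS⟩)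
  have hdAH : A ⊓ (H ⊓ S) = ⊥ := by
    rw [eq_bot_iff, ← hH.disjoint.eq_bot]
    exact le_inf inf_le_left (inf_le_right.trans inf_le_left)
  have hc2 : IsComplement' (A.subgroupOf S) ((H ⊓ S).subgroupOf S) :=
    isComplement'_subgroupOf hdAH (by rw [sup_comm] at hHS; rw [sup_comm]; exact hHS)
      hAS inf_le_right
  haveI : Group.IsSolvable (A.subgroupOf S) :=
    solvable_of_mulEquiv (subgroupOfEquivOfLe hAS).symm
  have hcoS : Nat.Coprime (Nat.card (A.subgroupOf S)) (A.subgroupOf S).index := by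
    have hidx : (A.subgroupOf S).index = Nat.card (M.subgroupOf S) := by
      have e1 := hc1.card_mul
      have e2 := Subgroup.card_mul_index (A.subgroupOf S)
      exact Nat.eq_of_mul_eq_mul_left Nat.card_pos (e2.trans e1.symm)
    rw [card_subgroupOf hAS, hidx, card_subgroupOf hMS]
    exact hcoAM
  obtain ⟨σ, hσ⟩ := conj_of_isComplement'_solvable (Nat.card (A.subgroupOf S))
    (A.subgroupOf S) le_rfl hcoS hc2 hc1
  -- transfer to G : (H ⊓ S).map (conj σ) = M
  have key : (H ⊓ S).map (MulAut.conj (σ : G)).toMonoidHom = M := by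
    have h1 : (((H ⊓ S).subgroupOf S).map (MulAut.conj σ).toMonoidHom).map S.subtype
        = (M.subgroupOf S).map S.subtype := by rw [hσ]
    rw [Subgroup.subgroupOf_map_subtype, inf_of_le_left hMS] at h1
    rw [Subgroup.map_map] at h1
    have hcomp : S.subtype.comp (MulAut.conj σ).toMonoidHom
        = ((MulAut.conj (σ : G)).toMonoidHom).comp S.subtype := by
      ext x; rfl
    rw [hcomp, ← Subgroup.map_map, Subgroup.subgroupOf_map_subtype,
      inf_of_le_left (inf_le_right : H ⊓ S ≤ S)] at h1
    exact h1
  have hMle : M ≤ H.map (MulAut.conj (σ : G)).toMonoidHom := by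
    rw [← key]
    exact Subgroup.map_mono inf_le_left
  have hcardH : Nat.card H = A.index := by
    have e1 := hH.card_mul
    have e2 := Subgroup.card_mul_index A
    exact Nat.eq_of_mul_eq_mul_left Nat.card_pos (e1.trans e2.symm)
  have hpiH : IsPiSubgroup π (H.map (MulAut.conj (σ : G)).toMonoidHom) := by
    intro p hp hdvd
    rw [card_map_equiv H _ (MulAut.conj (σ : G)).injective, hcardH] at hdvd
    exact hQ p hp hdvd
  have hMeq : M = H.map (MulAut.conj (σ : G)).toMonoidHom := hmax _ hpiH hMle
  rw [hS, hMeq, ← map_conj_self A (σ : G), ← Subgroup.map_sup, hH.sup_eq_top]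
  exact map_conj_self ⊤ (σ : G)

end Aux

section Core

/-- The π'-core of a nilpotent normal subgroup: a normal π'-subgroup `A ≤ N`
with `[N : A]` a π-number. -/
private theorem exists_core {G : Type*} [Group G] [Finite G] (π : Set ℕ)
    (N : Subgroup G) [N.Normal] (hnil : Group.IsNilpotent N) :
    ∃ A : Subgroup G, A ≤ N ∧ A.Normal ∧ Group.IsSolvable A ∧
      (∀ p : ℕ, p.Prime → p ∣ Nat.card A → p ∉ π) ∧
      (∀ p : ℕ, p.Prime → p ∣ (A.subgroupOf N).index → p ∈ π) := by
  classical
  haveI := hnil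
  have sylNormal : ∀ (p : ℕ), Fact p.Prime → ∀ (P : Sylow p N), (P : Subgroup N).Normal :=
    ((isNilpotent_of_finite_tfae (G := N)).out 0 3).mp hnil
  haveI : ∀ p : ℕ, Finite (Sylow p N) := fun p =>
    Finite.of_injective (fun P : Sylow p N => (P : Subgroup N))
      (fun _ _ h => Sylow.ext h)
  set n := Nat.card N with hn
  set ts : Finset ℕ := n.primeFactors.filter (· ∉ π) with hts
  have hts_prime : ∀ q ∈ ts, q.Prime := fun q hq =>
    Nat.prime_of_mem_primeFactors (Finset.mem_filter.mp hq).1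
  have hts_pi : ∀ q ∈ ts, q ∉ π := fun q hq => (Finset.mem_filter.mp hq).2
  let P : ∀ q : ts, Sylow (q : ℕ) N := fun _ => default
  let HH : ts → Subgroup G := fun q => ((P q : Subgroup N)).map N.subtype
  have hHle : ∀ q : ts, HH q ≤ N := fun q => Subgroup.map_subtype_le _
  have hHpgroup : ∀ q : ts, IsPGroup (q : ℕ) (HH q) := fun q =>
    ((P q).isPGroup').map N.subtype
  have hHnormal : ∀ q : ts, (HH q).Normal := by
    intro q
    haveI : Fact (q : ℕ).Prime := ⟨hts_prime q q.2⟩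
    haveI : ((P q : Subgroup N)).Normal := sylNormal _ ‹_› _
    haveI : ((P q : Subgroup N)).Characteristic :=
      Sylow.characteristic_of_normal (P q) ‹_›
    infer_instance
  have hcomm : Pairwise fun q₁ q₂ : ts =>
      ∀ x y : G, x ∈ HH q₁ → y ∈ HH q₂ → Commute x y := by
    intro q₁ q₂ hne
    haveI : Fact (q₁ : ℕ).Prime := ⟨hts_prime q₁ q₁.2⟩
    haveI : Fact (q₂ : ℕ).Prime := ⟨hts_prime q₂ q₂.2⟩
    have hne' : (q₁ : ℕ) ≠ (q₂ : ℕ) := fun h => hne (Subtype.ext h)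
    exact Subgroup.commute_of_normal_of_disjoint _ _ (hHnormal q₁) (hHnormal q₂)
      (IsPGroup.disjoint_of_ne _ _ hne' _ _ (hHpgroup q₁) (hHpgroup q₂))
  set A : Subgroup G := ⨆ q : ts, HH q with hA
  have hAle : A ≤ N := iSup_le hHle
  have hAnormal : A.Normal := by
    constructor
    intro x hx g
    have hmap : A.map (MulAut.conj g).toMonoidHom = A := by
      rw [hA, Subgroup.map_iSup]
      congr 1
      funext q
      haveI := hHnormal q
      exact map_conj_self (HH q) g
    rw [← hmap]
    exact ⟨x, hx, rfl⟩
  haveI := hAnormal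
  have hAsolv : Group.IsSolvable A := by
    haveI : Group.IsSolvable N := inferInstance
    exact solvable_of_mulEquiv (subgroupOfEquivOfLe hAle)
  -- cardinality of A
  have hApi' : ∀ p : ℕ, p.Prime → p ∣ Nat.card A → p ∉ π := by
    have hrange : (Subgroup.noncommPiCoprod hcomm).range = A := by
      rw [Subgroup.noncommPiCoprod_range, hA]
    haveI : ∀ q : ts, Fintype (HH q) := fun q => Fintype.ofFinite _
    have hinj : Function.Injective (Subgroup.noncommPiCoprod hcomm) := by
      apply Subgroup.injective_noncommPiCoprod_of_iSupIndep
      apply independent_of_coprime_order hcomm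
      intro q₁ q₂ hne
      haveI : Fact (q₁ : ℕ).Prime := ⟨hts_prime q₁ q₁.2⟩
      haveI : Fact (q₂ : ℕ).Prime := ⟨hts_prime q₂ q₂.2⟩
      have hne' : (q₁ : ℕ) ≠ (q₂ : ℕ) := fun h => hne (Subtype.ext h)
      simp only [← Nat.card_eq_fintype_card]
      exact IsPGroup.coprime_card_of_ne _ _ hne' _ _ (hHpgroup q₁) (hHpgroup q₂)
    have hcard : Nat.card A = ∏ q : ts, Nat.card (HH q) := by
      rw [← hrange]
      have h1 : Nat.card (Subgroup.noncommPiCoprod hcomm).range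
          = Nat.card (∀ q : ts, HH q) := by
        rw [← Nat.card_range_of_injective hinj]
        rfl
      rw [h1, Nat.card_pi]
    intro p hp hdvd
    rw [hcard] at hdvd
    obtain ⟨q, _, hdvd'⟩ := (Nat.Prime.prime hp).dvd_finset_prod_iff _ |>.mp hdvd
    haveI : Fact (q : ℕ).Prime := ⟨hts_prime q q.2⟩
    obtain ⟨k, hk⟩ := (IsPGroup.iff_card).mp (hHpgroup q)
    rw [hk] at hdvd'
    have : p = (q : ℕ) := by
      have := (Nat.prime_dvd_prime_iff_eq hp (hts_prime q q.2)).mp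
        (hp.dvd_of_dvd_pow hdvd')
      exact this
    rw [this]
    exact hts_pi q q.2
  -- elements of prime-power order for primes outside π lie in A
  have hppow : ∀ (q : ℕ), q.Prime → q ∉ π → ∀ (z : N) (k : ℕ),
      orderOf z ∣ q ^ k → (z : G) ∈ A := by
    intro q hq hqpi z k hzord
    haveI : Fact q.Prime := ⟨hq⟩
    by_cases hz1 : orderOf z = 1
    · have : z = 1 := orderOf_eq_one_iff.mp hz1
      rw [this]
      exact one_mem A
    · have hqdvd : q ∣ orderOf z := by
        obtain ⟨j, hjk, hj⟩ := (Nat.dvd_prime_pow hq).mp hzord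
        rcases Nat.eq_zero_or_pos j with hj0 | hjpos
        · rw [hj0, pow_zero] at hj; exact absurd hj hz1
        · rw [hj]; exact dvd_pow_self q hjpos.ne'
      have hqn : q ∣ n := by
        rw [hn]
        exact hqdvd.trans (orderOf_dvd_natCard z)
      have hqts : q ∈ ts := by
        rw [hts, Finset.mem_filter, Nat.mem_primeFactors]
        exact ⟨⟨hq, hqn, Nat.card_pos.ne'⟩, hqpi⟩
      -- z generates a q-group, contained in the unique Sylow q-subgroup
      have hzp : IsPGroup q (Subgroup.zpowers z) := by
        intro g
        refine ⟨k, ?_⟩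
        obtain ⟨g, hg⟩ := g
        obtain ⟨i, rfl⟩ := Subgroup.mem_zpowers_iff.mp hg
        apply Subtype.ext
        show (z ^ i) ^ (q ^ k : ℕ) = 1
        rw [← zpow_natCast, ← zpow_mul, mul_comm, zpow_mul, zpow_natCast]
        have : z ^ (q ^ k : ℕ) = 1 := orderOf_dvd_iff_pow_eq_one.mp hzord
        rw [this, one_zpow]
      obtain ⟨Q, hQ⟩ := IsPGroup.exists_le_sylow hzp
      haveI := Sylow.unique_of_normal (P ⟨q, hqts⟩) (by
        haveI : Fact q.Prime := ⟨hq⟩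
        exact sylNormal _ ‹_› _)
      have hQP : Q = P ⟨q, hqts⟩ := Subsingleton.elim _ _
      have hzQ : z ∈ (P ⟨q, hqts⟩ : Subgroup N) := by
        rw [← hQP]
        exact hQ (Subgroup.mem_zpowers z)
      have : (z : G) ∈ HH ⟨q, hqts⟩ := ⟨z, hzQ, rfl⟩
      exact le_iSup HH (⟨q, hqts⟩ : ts) this
  -- the index of A in N is a π-number
  refine ⟨A, hAle, hAnormal, hAsolv, hApi', ?_⟩
  intro p hp hdvd
  by_contra hppi
  haveI : Fact p.Prime := ⟨hp⟩
  rw [Subgroup.index_eq_card] at hdvd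
  haveI : Fintype (N ⧸ A.subgroupOf N) := Fintype.ofFinite _
  rw [Nat.card_eq_fintype_card] at hdvd
  obtain ⟨xq, hxq⟩ := exists_prime_orderOf_dvd_card p hdvd
  obtain ⟨x, rfl⟩ := QuotientGroup.mk'_surjective (A.subgroupOf N) xq
  set m := orderOf x with hm
  have hm0 : m ≠ 0 := by
    rw [hm]
    exact (orderOf_pos x).ne'
  set r := m / p ^ m.factorization p with hr
  have hzA : ((x ^ r : N) : G) ∈ A := by
    apply hppow p hp hppi (x ^ r) (m.factorization p)
    apply orderOf_dvd_iff_pow_eq_one.mpr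
    rw [← pow_mul, hr, Nat.div_mul_cancel (Nat.ordProj_dvd m p), hm]
    exact pow_orderOf_eq_one x
  have hxr1 : (QuotientGroup.mk' (A.subgroupOf N) x) ^ r = 1 := by
    rw [← map_pow]
    rw [QuotientGroup.mk'_apply, QuotientGroup.eq_one_iff]
    exact hzA
  have hpr : p ∣ r := by
    rw [← hxq]
    exact orderOf_dvd_iff_pow_eq_one.mpr hxr1
  exact Nat.not_dvd_ordCompl hp hm0 hpr

end Core

private lemma N_le_comap' {G : Type*} [Group G] (N : Subgroup G) [N.Normal]
    (Lbar : Subgroup (G ⧸ N)) : N ≤ Lbar.comap (QuotientGroup.mk' N) := by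
  intro x hx
  have h1 : ((x : G) : G ⧸ N) = 1 := (QuotientGroup.eq_one_iff x).mpr hx
  simp only [Subgroup.mem_comap, QuotientGroup.mk'_apply, h1]
  exact one_mem _

section CardLemma

private lemma card_eq_card_image_mul_card {G : Type*} [Group G] [Finite G]
    (N L : Subgroup G) [N.Normal] (hNL : N ≤ L) :
    Nat.card L = Nat.card (L.map (QuotientGroup.mk' N)) * Nat.card N := by
  set φ := (QuotientGroup.mk' N).comp L.subtype with hφ
  have hker : φ.ker = N.subgroupOf L := by
    ext x
    simp only [MonoidHom.mem_ker, hφ, MonoidHom.comp_apply, QuotientGroup.mk'_apply,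
      QuotientGroup.eq_one_iff]
    rfl
  have hrange : φ.range = L.map (QuotientGroup.mk' N) := by
    ext y
    constructor
    · rintro ⟨⟨x, hx⟩, rfl⟩
      exact ⟨x, hx, rfl⟩
    · rintro ⟨x, hx, rfl⟩
      exact ⟨⟨x, hx⟩, rfl⟩
  have h1 : Nat.card L = Nat.card (L ⧸ φ.ker) * Nat.card φ.ker :=
    Subgroup.card_eq_card_quotient_mul_card_subgroup φ.ker
  have h2 : Nat.card (L ⧸ φ.ker) = Nat.card φ.range :=
    Nat.card_congr (QuotientGroup.quotientKerEquivRange φ).toEquiv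
  have h3 : Nat.card φ.ker = Nat.card N := by
    rw [hker]
    exact card_subgroupOf hNL
  rw [h1, h2, h3, hrange]

end CardLemma

/-- For `N` the Fitting subgroup of a finite group `G`, the `π`-maximal subgroups of `G/N`
are exactly the images `KN/N` of the `π`-maximal subgroups `K` of `G`. -/
theorem stmt16 {G : Type*} [Group G] [Finite G] (π : Set ℕ) (N : Subgroup G)
    [N.Normal] (hnil : Group.IsNilpotent N)
    (hfit : ∀ M : Subgroup G, M.Normal → Group.IsNilpotent M → M ≤ N) :
    (∀ K : Subgroup G, IsPiMaximal π K →
      IsPiMaximal π (K.map (QuotientGroup.mk' N))) ∧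
    (∀ L : Subgroup (G ⧸ N), IsPiMaximal π L →
      ∃ K : Subgroup G, IsPiMaximal π K ∧ L = K.map (QuotientGroup.mk' N)) := by
  classical
  obtain ⟨A, hAN, hAnormal, hAsolv, hApi', hAidx⟩ := exists_core π N hnil
  haveI := hAnormal
  haveI := hAsolv
  set mk : G →* G ⧸ N := QuotientGroup.mk' N with hmk
  have hmksurj : Function.Surjective mk := QuotientGroup.mk'_surjective N
  -- π-subgroups map to π-subgroups
  have hmap_pi : ∀ (K : Subgroup G), IsPiSubgroup π K → IsPiSubgroup π (K.map mk) := by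
    intro K hK p hp hdvd
    exact hK p hp (hdvd.trans (Subgroup.card_dvd_of_surjective _
      (mk.subgroupMap_surjective K)))
  -- general setup for a π-subgroup Lbar of the quotient
  have hsetup : ∀ (Lbar : Subgroup (G ⧸ N)), IsPiSubgroup π Lbar →
      ∀ p : ℕ, p.Prime → p ∣ (A.subgroupOf (Lbar.comap mk)).index → p ∈ π := by
    intro Lbar hLbar p hp hdvd
    set L : Subgroup G := Lbar.comap mk with hL
    have hNL : N ≤ L := N_le_comap' N Lbar
    have hAL : A ≤ L := hAN.trans hNL
    have hmapL : L.map mk = Lbar := Subgroup.map_comap_eq_self_of_surjective hmksurj _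
    have hcardL : Nat.card L = Nat.card Lbar * Nat.card N := by
      rw [← hmapL]
      exact card_eq_card_image_mul_card N L hNL
    have hcardN : Nat.card N = Nat.card A * (A.subgroupOf N).index := by
      rw [← card_subgroupOf hAN]
      exact (Subgroup.card_mul_index (A.subgroupOf N)).symm
    have hidxL : Nat.card A * (A.subgroupOf L).index = Nat.card L := by
      rw [← card_subgroupOf hAL]
      exact Subgroup.card_mul_index (A.subgroupOf L)
    have hkey : (A.subgroupOf L).index = Nat.card Lbar * (A.subgroupOf N).index := by
      have hpos : 0 < Nat.card A := Nat.card_pos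
      have : Nat.card A * (A.subgroupOf L).index
          = Nat.card A * (Nat.card Lbar * (A.subgroupOf N).index) := by
        rw [hidxL, hcardL, hcardN]; ring
      exact Nat.eq_of_mul_eq_mul_left hpos this
    rw [hkey] at hdvd
    rcases (Nat.Prime.dvd_mul hp).mp hdvd with h | h
    · exact hLbar p hp h
    · exact hAidx p hp h
  have hAQbar : ∀ (Lbar : Subgroup (G ⧸ N)), IsPiSubgroup π Lbar →
      Group.IsSolvable (A.subgroupOf (Lbar.comap mk)) := by
    intro Lbar hLbar
    have hAL : A ≤ Lbar.comap mk := hAN.trans (N_le_comap' N Lbar)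
    exact solvable_of_mulEquiv (subgroupOfEquivOfLe hAL).symm
  -- transfer of π-subgroup property along subtype
  have hsub_pi : ∀ (L : Subgroup G) (X : Subgroup L),
      IsPiSubgroup π (X.map L.subtype) ↔ IsPiSubgroup π X := by
    intro L X
    have : Nat.card (X.map L.subtype) = Nat.card X :=
      card_map_equiv X L.subtype L.subtype_injective
    constructor
    · intro h p hp hdvd
      exact h p hp (by rwa [this])
    · intro h p hp hdvd
      exact h p hp (by rwa [this] at hdvd)
  constructor
  · -- part 1
    intro K hK
    refine ⟨hmap_pi K hK.1, ?_⟩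
    intro Lbar hLbar hle
    set L : Subgroup G := Lbar.comap mk with hL
    have hNL : N ≤ L := N_le_comap' N Lbar
    have hAL : A ≤ L := hAN.trans hNL
    have hKL : K ≤ L := by
      rw [hL]
      exact le_trans (Subgroup.le_comap_map mk K) (Subgroup.comap_mono hle)
    have hmapL : L.map mk = Lbar := Subgroup.map_comap_eq_self_of_surjective hmksurj _
    haveI : Group.IsSolvable (A.subgroupOf L) := hAQbar Lbar hLbar
    -- K.subgroupOf L is π-maximal in L
    have hKL_pi : IsPiSubgroup π (K.subgroupOf L) := by
      intro p hp hdvd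
      rw [card_subgroupOf hKL] at hdvd
      exact hK.1 p hp hdvd
    have hKL_max : ∀ P : Subgroup L, IsPiSubgroup π P → K.subgroupOf L ≤ P →
        K.subgroupOf L = P := by
      intro P hP hleP
      have hPG : IsPiSubgroup π (P.map L.subtype) := (hsub_pi L P).mpr hP
      have hKleP : K ≤ P.map L.subtype := by
        have := Subgroup.map_mono (f := L.subtype) hleP
        rwa [Subgroup.subgroupOf_map_subtype, inf_of_le_left hKL] at this
      have := hK.2 _ hPG hKleP
      -- K = P.map L.subtype ⟹ K.subgroupOf L = P
      rw [this]
      have : (P.map L.subtype).subgroupOf L = P :=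
        Subgroup.comap_map_eq_self_of_injective L.subtype_injective P
      rw [this]
    have hsup : (A.subgroupOf L) ⊔ (K.subgroupOf L) = ⊤ := by
      apply sup_eq_top_of_piMaximal π (A.subgroupOf L)
      · intro p hp hdvd
        rw [card_subgroupOf hAL] at hdvd
        exact hApi' p hp hdvd
      · exact hsetup Lbar hLbar
      · exact hKL_pi
      · exact hKL_max
    -- map back : A ⊔ K = L
    have hAKL : A ⊔ K = L := by
      have := congrArg (Subgroup.map L.subtype) hsup
      rw [Subgroup.map_sup, Subgroup.subgroupOf_map_subtype,
        Subgroup.subgroupOf_map_subtype, inf_of_le_left hAL, inf_of_le_left hKL] at this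
      rw [this]
      have : ((⊤ : Subgroup L)).map L.subtype = L := by
        rw [← MonoidHom.range_eq_map, Subgroup.range_subtype]
      rw [this]
    -- conclude : K.map mk = Lbar
    have : (A ⊔ K).map mk = Lbar := by rw [hAKL, hmapL]
    rw [Subgroup.map_sup] at this
    have hmapA : A.map mk = ⊥ := by
      rw [eq_bot_iff]
      rintro x ⟨a, ha, rfl⟩
      simp only [Subgroup.mem_bot, hmk, QuotientGroup.mk'_apply, QuotientGroup.eq_one_iff]
      exact hAN ha
    rw [hmapA, bot_sup_eq] at this
    exact this
  · -- part 2
    intro Lbar hLbar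
    set L : Subgroup G := Lbar.comap mk with hL
    have hNL : N ≤ L := N_le_comap' N Lbar
    have hAL : A ≤ L := hAN.trans hNL
    have hmapL : L.map mk = Lbar := Subgroup.map_comap_eq_self_of_surjective hmksurj _
    haveI : Group.IsSolvable (A.subgroupOf L) := hAQbar Lbar hLbar.1
    -- find a π-maximal subgroup of L
    have hbot_pi : IsPiSubgroup π (⊥ : Subgroup L) := by
      intro p hp hdvd
      rw [Subgroup.card_bot] at hdvd
      have h2 := hp.two_le
      have h3 := Nat.le_of_dvd one_pos hdvd
      omega
    obtain ⟨M, -, hMmax⟩ := Finite.exists_le_maximal hbot_pi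
    have hM_pi : IsPiSubgroup π M := hMmax.1
    have hM_max : ∀ P : Subgroup L, IsPiSubgroup π P → M ≤ P → M = P :=
      fun P hP hle => le_antisymm hle (hMmax.2 hP hle)
    have hsup : (A.subgroupOf L) ⊔ M = ⊤ := by
      apply sup_eq_top_of_piMaximal π (A.subgroupOf L)
      · intro p hp hdvd
        rw [card_subgroupOf hAL] at hdvd
        exact hApi' p hp hdvd
      · exact hsetup Lbar hLbar.1
      · exact hM_pi
      · exact hM_max
    set K : Subgroup G := M.map L.subtype with hK
    have hKL : K ≤ L := Subgroup.map_subtype_le _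
    have hK_pi : IsPiSubgroup π K := (hsub_pi L M).mpr hM_pi
    have hMK : M = K.subgroupOf L := by
      rw [hK]
      exact (Subgroup.comap_map_eq_self_of_injective L.subtype_injective M).symm
    -- A ⊔ K = L
    have hAKL : A ⊔ K = L := by
      have := congrArg (Subgroup.map L.subtype) hsup
      rw [Subgroup.map_sup, Subgroup.subgroupOf_map_subtype, inf_of_le_left hAL] at this
      rw [← hK] at this
      rw [this]
      rw [← MonoidHom.range_eq_map, Subgroup.range_subtype]
    have hmapA : A.map mk = ⊥ := by
      rw [eq_bot_iff]
      rintro x ⟨a, ha, rfl⟩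
      simp only [Subgroup.mem_bot, hmk, QuotientGroup.mk'_apply, QuotientGroup.eq_one_iff]
      exact hAN ha
    have hmapK : K.map mk = Lbar := by
      have : (A ⊔ K).map mk = Lbar := by rw [hAKL, hmapL]
      rw [Subgroup.map_sup, hmapA, bot_sup_eq] at this
      exact this
    -- K is π-maximal in G
    refine ⟨K, ⟨hK_pi, ?_⟩, hmapK.symm⟩
    intro P hP hKP
    have hmapP : P.map mk = Lbar := by
      apply (hLbar.2 (P.map mk) (hmap_pi P hP) ?_).symm
      rw [← hmapK]
      exact Subgroup.map_mono hKP
    have hPL : P ≤ L := by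
      rw [hL, ← hmapP]
      exact Subgroup.le_comap_map mk P
    have hP' : IsPiSubgroup π (P.subgroupOf L) := by
      intro p hp hdvd
      rw [card_subgroupOf hPL] at hdvd
      exact hP p hp hdvd
    have hle' : M ≤ P.subgroupOf L := by
      rw [hMK]
      intro x hx
      exact hKP hx
    have := hM_max _ hP' hle'
    rw [hMK] at this
    -- subgroupOf equal ⟹ equal
    have := congrArg (Subgroup.map L.subtype) this
    rwa [Subgroup.subgroupOf_map_subtype, Subgroup.subgroupOf_map_subtype,
      inf_of_le_left hKL, inf_of_le_left hPL] at this
end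

section
/- Let G be a finite group, π a set of primes, N the Fitting subgroup of G, and H a π-submaximal subgroup of G. Then H ∩ N equals O_π(N), the unique π-Hall subgroup of the nilpotent group N. -/
/-- `H` is a `π`-Hall subgroup: `|H|` is a `π`-number and `|G : H|` is a `π'`-number. -/
def IsHall (π : Set ℕ) {G : Type*} [Group G] (H : Subgroup G) : Prop :=
  (∀ p : ℕ, p.Prime → p ∣ Nat.card H → p ∈ π) ∧
    ∀ p : ℕ, p.Prime → p ∣ H.index → p ∉ π
/-- `H` is `π`-submaximal in `G`: there is an embedding `φ` of `G` into a finite group `Y`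
with `φ(G)` subnormal in `Y` and `φ(H) = K ∩ φ(G)` for some `π`-maximal subgroup `K` of `Y`. -/
def IsPiSubmaximal (π : Set ℕ) {G : Type} [Group G] (H : Subgroup G) : Prop :=
  ∃ (Y : Type) (_ : Group Y) (_ : Finite Y) (φ : G →* Y),
    Function.Injective φ ∧ IsSubnormal φ.range ∧
    ∃ K : Subgroup Y, IsPiMaximal π K ∧ H.map φ = K ⊓ φ.range

/-!
Let `φ : G → Y` be the subnormal embedding and `K` the `π`-maximal subgroup of `Y` with
`φ(H) = K ∩ φ(G)`. `O_π(N)` is characteristic in the normal subgroup `N`, hence normal in `G`,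
so its image is a subnormal `π`-subgroup of `Y`. Such a subgroup lies in `O_π(Y)`, and every
`π`-maximal subgroup contains `O_π(Y)`; pulling back, `O_π(N) ≤ H ∩ N`. Conversely `H ∩ N` embeds
in `K`, so it is a `π`-subgroup of `N`. As `N` is nilpotent, `O_π(N)` contains the Sylow
`p`-subgroups of `N` for `p ∈ π`, so it has `π'`-index in `N`; for a `π`-subgroup `B ≤ N` it then
has `π'`-index in the `π`-group `B O_π(N)`, forcing `B ≤ O_π(N)`.
-/

open Subgroup

variable {π : Set ℕ} {Y Z : Type*} [Group Y] [Group Z]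

section PiSubgroup

theorem le_normalizer_sup {S A B : Subgroup Y} (hA : S ≤ normalizer A) (hB : S ≤ normalizer B) :
    S ≤ normalizer (A ⊔ B : Subgroup Y) := by
  intro g hg
  rw [mem_normalizer_iff_map_conj_eq, Subgroup.map_sup, mem_normalizer_iff_map_conj_eq.mp (hA hg),
    mem_normalizer_iff_map_conj_eq.mp (hB hg)]

theorem isPiSubgroup_bot : IsPiSubgroup π (⊥ : Subgroup Y) := by
  intro p hp hdvd
  rw [card_bot, Nat.dvd_one] at hdvd
  exact absurd hdvd hp.ne_one

theorem IsPiSubgroup.of_card_dvd {A : Subgroup Y} {B : Subgroup Z}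
    (h : Nat.card A ∣ Nat.card B) (hB : IsPiSubgroup π B) : IsPiSubgroup π A :=
  fun p hp hdvd => hB p hp (hdvd.trans h)

theorem IsPiSubgroup.mono {A B : Subgroup Y} (hAB : A ≤ B) (hB : IsPiSubgroup π B) :
    IsPiSubgroup π A :=
  hB.of_card_dvd (card_dvd_of_le hAB)

theorem IsPiSubgroup.map {A : Subgroup Y} (hA : IsPiSubgroup π A) {f : Y →* Z}
    (hf : Function.Injective f) : IsPiSubgroup π (A.map f) :=
  hA.of_card_dvd (card_map_of_injective hf).dvd

theorem IsPiSubgroup.of_map_le {A : Subgroup Y} {B : Subgroup Z} {f : Y →* Z}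
    (hf : Function.Injective f) (hAB : A.map f ≤ B) (hB : IsPiSubgroup π B) :
    IsPiSubgroup π A :=
  (hB.mono hAB).of_card_dvd (card_map_of_injective hf).symm.dvd

theorem card_subgroupOf_of_le {A S : Subgroup Y} (h : A ≤ S) :
    Nat.card (A.subgroupOf S) = Nat.card A :=
  Nat.card_congr (subgroupOfEquivOfLe h).toEquiv

theorem isPiSubgroup_subgroupOf_iff {A S : Subgroup Y} (h : A ≤ S) :
    IsPiSubgroup π (A.subgroupOf S) ↔ IsPiSubgroup π A := by
  simp only [IsPiSubgroup, card_subgroupOf_of_le h]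

theorem IsPGroup.isPiSubgroup [Finite Y] {p : ℕ} [Fact p.Prime] {P : Subgroup Y}
    (hP : IsPGroup p P) (hp : p ∈ π) : IsPiSubgroup π P := by
  obtain ⟨n, hn⟩ := IsPGroup.iff_card.mp hP
  intro q hq hdvd
  rw [hn] at hdvd
  rwa [(Nat.prime_dvd_prime_iff_eq hq Fact.out).mp (hq.dvd_of_dvd_pow hdvd)]

theorem relIndex_sup_of_le_normalizer {A B : Subgroup Y} (h : A ≤ normalizer B) :
    B.relIndex (A ⊔ B) = B.relIndex A := by
  have := normal_subgroupOf_of_le_normalizer h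
  have := normal_subgroupOf_sup_of_le_normalizer h
  exact Nat.card_congr (QuotientGroup.quotientInfEquivProdNormalizerQuotient A B h).toEquiv.symm

theorem card_sup_dvd_of_le_normalizer {A B : Subgroup Y} (h : A ≤ normalizer B) :
    Nat.card (A ⊔ B : Subgroup Y) ∣ Nat.card B * Nat.card A := by
  rw [← relIndex_bot_left, ← relIndex_mul_relIndex ⊥ B (A ⊔ B) bot_le le_sup_right,
    relIndex_sup_of_le_normalizer h, relIndex_bot_left]
  exact mul_dvd_mul_left _ (relIndex_dvd_card _ _)

theorem IsPiSubgroup.sup_of_le_normalizer {A B : Subgroup Y} (hA : IsPiSubgroup π A)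
    (hB : IsPiSubgroup π B) (h : A ≤ normalizer B) : IsPiSubgroup π (A ⊔ B) := by
  intro p hp hdvd
  rcases hp.dvd_mul.mp (hdvd.trans (card_sup_dvd_of_le_normalizer h)) with hpB | hpA
  · exact hB p hp hpB
  · exact hA p hp hpA

theorem le_of_isPiSubgroup_of_relIndex {A C S : Subgroup Y} (hAC : A ≤ C) (hCS : C ≤ S)
    (hC : IsPiSubgroup π C) (hA : ∀ p : ℕ, p.Prime → p ∣ A.relIndex S → p ∉ π) : C ≤ A := by
  rw [← relIndex_eq_one]
  by_contra hne
  obtain ⟨p, hp, hdvd⟩ := Nat.exists_prime_and_dvd hne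
  have hdvd_S : p ∣ A.relIndex S :=
    hdvd.trans (relIndex_mul_relIndex A C S hAC hCS ▸ dvd_mul_right _ _)
  exact hA p hp hdvd_S (hC p hp (hdvd.trans (relIndex_dvd_card _ _)))

end PiSubgroup

section PiCore

def normalizedPiSubgroups (π : Set ℕ) (S : Subgroup Y) : Set (Subgroup Y) :=
  {P | P ≤ S ∧ S ≤ normalizer P ∧ IsPiSubgroup π P}

/-- `O_π(S)`, the largest normal `π`-subgroup of `S`, as a subgroup of the ambient group. -/
def piCore (π : Set ℕ) (S : Subgroup Y) : Subgroup Y :=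
  sSup (normalizedPiSubgroups π S)

variable {S T P : Subgroup Y}

theorem supClosed_normalizedPiSubgroups : SupClosed (normalizedPiSubgroups π S) := by
  rintro A ⟨hAS, hSA, hA⟩ B ⟨hBS, hSB, hB⟩
  exact ⟨sup_le hAS hBS, le_normalizer_sup hSA hSB, hA.sup_of_le_normalizer hB (hAS.trans hSB)⟩

theorem piCore_mem_normalizedPiSubgroups [Finite Y] :
    piCore π S ∈ normalizedPiSubgroups π S :=
  supClosed_normalizedPiSubgroups.sSup_mem (Set.toFinite _)
    ⟨bot_le, le_normalizer_of_normal, isPiSubgroup_bot⟩ le_rfl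

theorem le_piCore (hPS : P ≤ S) (hSP : S ≤ normalizer P) (hP : IsPiSubgroup π P) :
    P ≤ piCore π S :=
  le_sSup ⟨hPS, hSP, hP⟩

theorem piCore_le [Finite Y] : piCore π S ≤ S :=
  piCore_mem_normalizedPiSubgroups.1

theorem le_normalizer_piCore [Finite Y] : S ≤ normalizer (piCore π S : Set Y) :=
  piCore_mem_normalizedPiSubgroups.2.1

theorem isPiSubgroup_piCore [Finite Y] : IsPiSubgroup π (piCore π S) :=
  piCore_mem_normalizedPiSubgroups.2.2

theorem map_piCore_le [Finite Y] {f : Y →* Z} (hf : Function.Injective f) :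
    (piCore π S).map f ≤ piCore π (S.map f) :=
  le_piCore (map_mono piCore_le) ((map_mono le_normalizer_piCore).trans (le_normalizer_map f))
    (isPiSubgroup_piCore.map hf)

/-- `O_π(S)` is characteristic in `S`. -/
theorem normalizer_le_normalizer_piCore [Finite Y] :
    normalizer S ≤ normalizer (piCore π S : Set Y) := by
  refine le_normalizer_iff.mpr fun g hg x hx => ?_
  have hconj : (piCore π S).map (MulAut.conj g : Y →* Y) ≤ piCore π S := by
    have h := map_piCore_le (π := π) (S := S) (f := (MulAut.conj g : Y →* Y))
      (MulAut.conj g).injective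
    rwa [mem_normalizer_iff_map_conj_eq.mp hg] at h
  exact hconj ⟨x, hx, rfl⟩

instance normal_piCore [Finite Y] [S.Normal] : (piCore π S).Normal :=
  normalizer_eq_top_iff.mp <| top_le_iff.mp <|
    le_normalizer_of_normal.trans normalizer_le_normalizer_piCore

theorem piCore_mono_of_le_normalizer [Finite Y] (hST : S ≤ T) (hTS : T ≤ normalizer S) :
    piCore π S ≤ piCore π T :=
  le_piCore (piCore_le.trans hST) (hTS.trans normalizer_le_normalizer_piCore) isPiSubgroup_piCore

theorem IsSubnormal.piCore_le [Finite Y] (hS : _root_.IsSubnormal S) :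
    piCore π S ≤ piCore π ⊤ := by
  obtain ⟨n, f, rfl, htop, hstep⟩ := hS
  suffices ∀ i, piCore π (f 0) ≤ piCore π (f i) by simpa [htop] using this (Fin.last n)
  intro i
  induction i using Fin.induction with
  | zero => exact le_rfl
  | succ i ih =>
    obtain ⟨hle, hnormal⟩ := hstep i
    exact ih.trans (piCore_mono_of_le_normalizer hle
      ((normal_subgroupOf_iff_le_normalizer hle).mp hnormal))

theorem IsPiMaximal.le_of_normal {K : Subgroup Y} (hK : IsPiMaximal π K) [P.Normal]
    (hP : IsPiSubgroup π P) : P ≤ K :=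
  le_sup_right.trans (hK.2 _ (hK.1.sup_of_le_normalizer hP le_normalizer_of_normal)
    le_sup_left).ge

end PiCore

section Nilpotent

variable [Finite Y] {S B : Subgroup Y} [Group.IsNilpotent S]

theorem map_sylow_le_piCore {p : ℕ} [Fact p.Prime] (hp : p ∈ π) (P : Sylow p S) :
    (P : Subgroup S).map S.subtype ≤ piCore π S := by
  refine le_piCore (map_subtype_le _) ?_ ((P.isPGroup'.map S.subtype).isPiSubgroup hp)
  rw [← normal_subgroupOf_iff_le_normalizer (map_subtype_le _), subgroupOf,
    comap_map_eq_self_of_injective S.subtype_injective]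
  infer_instance

theorem notMem_of_dvd_relIndex_piCore {p : ℕ} (hp : p.Prime)
    (hdvd : p ∣ (piCore π S).relIndex S) : p ∉ π := by
  intro hpπ
  have := Fact.mk hp
  obtain ⟨P⟩ : Nonempty (Sylow p S) := inferInstance
  have hP : (P : Subgroup S) ≤ (piCore π S).subgroupOf S :=
    map_le_iff_le_comap.mp (map_sylow_le_piCore hpπ P)
  exact P.not_dvd_index (hdvd.trans (index_dvd_of_le hP))

theorem le_piCore_of_isPiSubgroup (hBS : B ≤ S) (hB : IsPiSubgroup π B) : B ≤ piCore π S :=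
  le_sup_left.trans <| le_of_isPiSubgroup_of_relIndex le_sup_right (sup_le hBS piCore_le)
    (hB.sup_of_le_normalizer isPiSubgroup_piCore (hBS.trans le_normalizer_piCore))
    fun _ => notMem_of_dvd_relIndex_piCore

theorem isHall_piCore : IsHall π ((piCore π S).subgroupOf S) :=
  ⟨(isPiSubgroup_subgroupOf_iff piCore_le).mpr isPiSubgroup_piCore,
    fun _ => notMem_of_dvd_relIndex_piCore⟩

theorem eq_piCore_of_isHall (hBS : B ≤ S) (hB : IsHall π (B.subgroupOf S)) : B = piCore π S :=
  have hle := le_piCore_of_isPiSubgroup hBS ((isPiSubgroup_subgroupOf_iff hBS).mp hB.1)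
  le_antisymm hle (le_of_isPiSubgroup_of_relIndex hle piCore_le isPiSubgroup_piCore hB.2)

end Nilpotent

theorem stmt17_general {G : Type} [Group G] [Finite G] (π : Set ℕ) (N H : Subgroup G)
    [N.Normal] (hnil : Group.IsNilpotent N)
    (hH : IsPiSubmaximal π H) :
    IsHall π ((H ⊓ N).subgroupOf N) ∧
    ∀ B : Subgroup G, B ≤ N → IsHall π (B.subgroupOf N) → B = H ⊓ N := by
  obtain ⟨Y, _, _, φ, hφ, hsub, K, hK, hHK⟩ := hH
  have hcore : (piCore π N).map φ ≤ K :=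
    calc (piCore π N).map φ
        ≤ (piCore π ⊤).map φ :=
          map_mono (piCore_mono_of_le_normalizer le_top le_normalizer_of_normal)
      _ ≤ piCore π φ.range := MonoidHom.range_eq_map φ ▸ map_piCore_le hφ
      _ ≤ piCore π ⊤ := hsub.piCore_le
      _ ≤ K := hK.le_of_normal isPiSubgroup_piCore
  have hle : piCore π N ≤ H := by
    rw [← map_le_map_iff_of_injective hφ, hHK]
    exact le_inf hcore (map_le_range φ _)
  have hHN : H ⊓ N = piCore π N :=
    le_antisymm (le_piCore_of_isPiSubgroup inf_le_right
        (hK.1.of_map_le hφ ((map_mono inf_le_left).trans (hHK.trans_le inf_le_left))))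
      (le_inf hle piCore_le)
  rw [hHN]
  exact ⟨isHall_piCore, fun B hBN hB => eq_piCore_of_isHall hBN hB⟩

/-- If `N` is the Fitting subgroup of `G` and `H` is `π`-submaximal in `G`, then `H ∩ N`
is the unique `π`-Hall subgroup `O_π(N)` of the nilpotent group `N`. -/
theorem stmt17 {G : Type} [Group G] [Finite G] (π : Set ℕ) (N H : Subgroup G)
    [N.Normal] (hnil : Group.IsNilpotent N)
    (hfit : ∀ M : Subgroup G, M.Normal → Group.IsNilpotent M → M ≤ N)
    (hH : IsPiSubmaximal π H) :
    IsHall π ((H ⊓ N).subgroupOf N) ∧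
    ∀ B : Subgroup G, B ≤ N → IsHall π (B.subgroupOf N) → B = H ⊓ N :=
  stmt17_general π N H hnil hH
end
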